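/- For every n, m ≥ 1, the m-th L-duplicating matrix D_{n+1}^{(m)} is a right-inverse of the m-th L-eliminating matrix E_{n+1}^{(m)}, i.e. E_{n+1}^{(m)} · D_{n+1}^{(m)} = I_{n(m+1)+1}; moreover, the product D_{n+1}^{(m)} · E_{n+1}^{(m)} acts as the identity on vec(X_n^{(m)}(x)), i.e. D_{n+1}^{(m)} · E_{n+1}^{(m)} · vec(X_n^{(m)}(x)) = vec(X_n^{(m)}(x)) for every x ∈ ℝ. -/

import Mathlib

open Matrix MeasureTheory

namespace Correlators

lemma pos_left {a b k : ℕ} (h : k < a * b) : 0 < a := by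
  rcases Nat.eq_zero_or_pos a with rfl | h'
  · simp at h
  · exact h'

lemma pos_right {a b k : ℕ} (h : k < a * b) : 0 < b := by
  rcases Nat.eq_zero_or_pos b with rfl | h'
  · simp at h
  · exact h'

lemma div_lt_left {a c k : ℕ} (h : k < a * c) : k / c < a :=
  Nat.div_lt_of_lt_mul (by rwa [Nat.mul_comm] at h)

lemma unvec_idx {p q : ℕ} (i : Fin p) (j : Fin q) : j.1 * p + i.1 < p * q :=
  calc j.1 * p + i.1 < j.1 * p + p := Nat.add_lt_add_left i.2 _
    _ = (j.1 + 1) * p := by ring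
    _ ≤ q * p := Nat.mul_le_mul_right p j.2
    _ = p * q := Nat.mul_comm q p

/-- `H_N(x) = (1, x, x², …, x^N)ᵀ ∈ ℝ^{N+1}`, the monomial basis vector. -/
def Hmon (N : ℕ) (x : ℝ) : Fin (N + 1) → ℝ := fun i => x ^ (i : ℕ)

/-- Vectorization of a matrix: stacks the columns, `vec(A)_{n(j-1)+i} = A_{i,j}` (1-based). -/
def vec {n m : ℕ} (A : Matrix (Fin n) (Fin m) ℝ) : Fin (n * m) → ℝ :=
  fun k => A ⟨k.1 % n, Nat.mod_lt _ (pos_left k.2)⟩ ⟨k.1 / n, Nat.div_lt_of_lt_mul k.2⟩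

/-- Inverse vectorization: `unvec w` is the `p × q` matrix `B` with `B_{i,j} = w_{p(j-1)+i}`. -/
def unvec {p q : ℕ} (w : Fin (p * q) → ℝ) : Matrix (Fin p) (Fin q) ℝ :=
  Matrix.of fun i j => w ⟨j.1 * p + i.1, unvec_idx i j⟩

/-- L-vectorization: the first column of `A` followed by the last row of `A`. -/
def vecL {n m : ℕ} (A : Matrix (Fin n) (Fin m) ℝ) : Fin (n + m - 1) → ℝ :=
  fun k =>
    if h : k.1 < n then
      if hm : 0 < m then A ⟨k.1, h⟩ ⟨0, hm⟩ else 0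
    else
      if hn : 0 < n then
        A ⟨n - 1, Nat.sub_lt hn Nat.one_pos⟩ ⟨k.1 - n + 1, by have hk := k.2; omega⟩
      else 0

/-- A matrix is Hankel if its entries are constant along skew-diagonals. -/
def IsHankel {n m : ℕ} (A : Matrix (Fin n) (Fin m) ℝ) : Prop :=
  ∀ (i i' : Fin n) (j j' : Fin m), i.1 + j.1 = i'.1 + j'.1 → A i j = A i' j'

/-- Kronecker product of matrices, with flattened `Fin` indices:
`(A ⊗ B)_{(i-1)c+p,(j-1)d+q} = A_{i,j} B_{p,q}` (1-based). -/
def kron {a b c d : ℕ} (A : Matrix (Fin a) (Fin b) ℝ) (B : Matrix (Fin c) (Fin d) ℝ) :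
    Matrix (Fin (a * c)) (Fin (b * d)) ℝ :=
  Matrix.of fun i j =>
    A ⟨i.1 / c, div_lt_left i.2⟩ ⟨j.1 / d, div_lt_left j.2⟩ *
      B ⟨i.1 % c, Nat.mod_lt _ (pos_right i.2)⟩ ⟨j.1 % d, Nat.mod_lt _ (pos_right j.2)⟩

/-- Kronecker product of (column) vectors: `(u ⊗ v)_{(i-1)b+j} = u_i v_j` (1-based). -/
def vkron {a b : ℕ} (u : Fin a → ℝ) (v : Fin b → ℝ) : Fin (a * b) → ℝ :=
  fun k => u ⟨k.1 / b, div_lt_left k.2⟩ * v ⟨k.1 % b, Nat.mod_lt _ (pos_right k.2)⟩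

/-- Kronecker power of a vector: `u^{⊗0} = 1`, `u^{⊗(r+1)} = u^{⊗r} ⊗ u`. -/
def vkronPow {a : ℕ} (u : Fin a → ℝ) : (r : ℕ) → Fin (a ^ r) → ℝ
  | 0 => fun _ => 1
  | r + 1 => fun k => vkron (vkronPow u r) u (Fin.cast (pow_succ a r) k)

/-- A vector viewed as a one-row matrix (its transpose as a column vector). -/
def rowOf {N : ℕ} (u : Fin N → ℝ) : Matrix (Fin 1) (Fin N) ℝ := Matrix.of fun _ j => u j

/-- A vector viewed as a one-column matrix. -/
def colOf {N : ℕ} (u : Fin N → ℝ) : Matrix (Fin N) (Fin 1) ℝ := Matrix.of fun i _ => u i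

/-- Kronecker power of a matrix. -/
def mkronPow {a b : ℕ} (A : Matrix (Fin a) (Fin b) ℝ) :
    (r : ℕ) → Matrix (Fin (a ^ r)) (Fin (b ^ r)) ℝ
  | 0 => Matrix.of fun _ _ => (1 : ℝ)
  | r + 1 =>
      (kron (mkronPow A r) A).submatrix (Fin.cast (pow_succ a r)) (Fin.cast (pow_succ b r))

/-- `X_n^{(r)}(x) := H_n(x)ᵀ ⊗^r H_n(x) = (H_n(x)ᵀ)^{⊗r} ⊗ H_n(x)`,
a matrix in `ℝ^{(n+1) × (n+1)^r}`. -/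
def Xmat (n r : ℕ) (x : ℝ) : Matrix (Fin (n + 1)) (Fin ((n + 1) ^ r)) ℝ :=
  (kron (mkronPow (rowOf (Hmon n x)) r) (colOf (Hmon n x))).submatrix
    (Fin.cast (by simp)) (Fin.cast (by simp))

/-- The L-eliminating matrix
`E_{n,m} = ∑_{i=1}^n e_{n+m-1,i} ⊗ e_{m,1}ᵀ ⊗ e_{n,i}ᵀ + ∑_{i=2}^m e_{n+m-1,n+i-1} ⊗ e_{m,i}ᵀ ⊗ e_{n,n}ᵀ`,
written entrywise: the `i`-th summand of the first sum is the matrix with a single `1` in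
(1-based) position `(i, i)`, and the `i`-th summand of the second sum has its single `1` in
position `(n+i-1, n·i)`. -/
def Emat (n m : ℕ) : Matrix (Fin (n + m - 1)) (Fin (n * m)) ℝ :=
  Matrix.of fun r c =>
    (∑ i ∈ Finset.range n, if r.1 = i ∧ c.1 = i then (1 : ℝ) else 0) +
    (∑ i ∈ Finset.Icc 2 m, if r.1 = n + i - 2 ∧ c.1 + 1 = n * i then (1 : ℝ) else 0)

/-- The L-duplicating matrix `D_{n,m} = ∑_{i=1}^n ∑_{j=1}^m e_{n+m-1,i+j-1}ᵀ ⊗ e_{m,j} ⊗ e_{n,i}`,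
written entrywise: the `(i,j)` summand is the matrix with a single `1` in (1-based) position
`(n(j-1)+i, i+j-1)`. -/
def Dmat (n m : ℕ) : Matrix (Fin (n * m)) (Fin (n + m - 1)) ℝ :=
  Matrix.of fun r c =>
    ∑ i ∈ Finset.range n, ∑ j ∈ Finset.range m,
      if r.1 = n * j + i ∧ c.1 = i + j then (1 : ℝ) else 0

lemma arA (n : ℕ) : n * (0 + 2) + 1 = (n + 1) + (n + 1) - 1 := by omega

lemma arB (n : ℕ) : (n + 1) ^ (0 + 2) = (n + 1) * (n + 1) := by ring

lemma arC (n k : ℕ) : (n * (k + 2) + 1) * (n + 1) = (n + 1) * (n * (k + 2) + 1) :=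
  Nat.mul_comm _ _

lemma arD (n k : ℕ) : n * (k + 1 + 2) + 1 = n * (k + 2) + 1 + (n + 1) - 1 := by
  rw [Nat.add_sub_assoc (Nat.le_add_left 1 n), Nat.add_sub_cancel]
  ring

lemma arE (n k : ℕ) : (n + 1) ^ (k + 1 + 2) = (n + 1) * (n + 1) ^ (k + 2) := by ring

/-- The iterated L-eliminating matrices `E_{n+1}^{(m)}` (here indexed by `k := m - 1`):
`E_{n+1}^{(1)} = E_{n+1,n+1}` and `E_{n+1}^{(m)} = E_{nm+1,n+1} · (I_{n+1} ⊗ E_{n+1}^{(m-1)})`. -/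
def EL (n : ℕ) : (k : ℕ) → Matrix (Fin (n * (k + 2) + 1)) (Fin ((n + 1) ^ (k + 2))) ℝ
  | 0 => (Emat (n + 1) (n + 1)).submatrix (Fin.cast (arA n)) (Fin.cast (arB n))
  | k + 1 =>
      (Emat (n * (k + 2) + 1) (n + 1) *
        (kron (1 : Matrix (Fin (n + 1)) (Fin (n + 1)) ℝ) (EL n k)).submatrix
          (Fin.cast (arC n k)) id).submatrix
        (Fin.cast (arD n k)) (Fin.cast (arE n k))

/-- The iterated L-duplicating matrices `D_{n+1}^{(m)}` (here indexed by `k := m - 1`):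
`D_{n+1}^{(1)} = D_{n+1,n+1}` and `D_{n+1}^{(m)} = (I_{n+1} ⊗ D_{n+1}^{(m-1)}) · D_{nm+1,n+1}`. -/
def DL (n : ℕ) : (k : ℕ) → Matrix (Fin ((n + 1) ^ (k + 2))) (Fin (n * (k + 2) + 1)) ℝ
  | 0 => (Dmat (n + 1) (n + 1)).submatrix (Fin.cast (arB n)) (Fin.cast (arA n))
  | k + 1 =>
      ((kron (1 : Matrix (Fin (n + 1)) (Fin (n + 1)) ℝ) (DL n k)).submatrix
          id (Fin.cast (arC n k)) * Dmat (n * (k + 2) + 1) (n + 1)).submatrix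
        (Fin.cast (arE n k)) (Fin.cast (arD n k))

/-- The exponent `γ_{n,r}^{(k)} = ∑_{j=0}^{r-1} ((k-1) mod (n+1)^{r-j}) div (n+1)^{r-1-j}`
(`k` is 1-based). -/
def gamExp (n r k : ℕ) : ℕ :=
  ∑ j ∈ Finset.range r, ((k - 1) % (n + 1) ^ (r - j)) / (n + 1) ^ (r - 1 - j)

/-- Entry `(p, q)` (0-based) of the generator matrix of a polynomial jump-diffusion with
drift `b₀ + b₁ x`, squared diffusion `σ₀ + σ₁ x + σ₂ x²`, and jump moments
`∫ z^m ℓ(x,dz) = ∑_{i=0}^m ξ_i^m x^i` (`ξ m i` denotes `ξ_i^m`), with respect to the monomial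
basis. -/
noncomputable def genEntry (b₀ b₁ σ₀ σ₁ σ₂ : ℝ) (ξ : ℕ → ℕ → ℝ) (p q : ℕ) : ℝ :=
  if q = p then
    (p : ℝ) * b₁ + (1 / 2) * (p : ℝ) * ((p : ℝ) - 1) * σ₂ +
      ∑ k ∈ Finset.Icc 2 p, (p.choose k : ℝ) * ξ k k
  else if q + 1 = p then
    (p : ℝ) * b₀ + (1 / 2) * (p : ℝ) * ((p : ℝ) - 1) * σ₁ +
      ∑ k ∈ Finset.Icc 2 p, (p.choose k : ℝ) * ξ k (k - 1)
  else if q + 2 = p then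
    (1 / 2) * (p : ℝ) * ((p : ℝ) - 1) * σ₀ +
      ∑ k ∈ Finset.Icc 2 p, (p.choose k : ℝ) * ξ k (k - 2)
  else if q + 2 < p then
    ∑ k ∈ Finset.Icc (p - q) p, (p.choose k : ℝ) * ξ k (k - (p - q))
  else 0

/-- The generator matrix `G_n` of a polynomial jump-diffusion w.r.t. the monomial basis. -/
noncomputable def genMat (b₀ b₁ σ₀ σ₁ σ₂ : ℝ) (ξ : ℕ → ℕ → ℝ) (n : ℕ) :
    Matrix (Fin (n + 1)) (Fin (n + 1)) ℝ :=
  Matrix.of fun p q => genEntry b₀ b₁ σ₀ σ₁ σ₂ ξ p.1 q.1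


lemma block_idx {n r k : ℕ} (hr : 1 ≤ r) (hk1 : 1 ≤ k) (hk2 : k ≤ (n + 1) ^ (r - 1))
    (c : Fin (n + 1)) : (k - 1) * (n + 1) + c.1 < (n + 1) ^ r := by
  have hc := c.2
  have h1 : (k - 1 + 1) * (n + 1) ≤ (n + 1) ^ (r - 1) * (n + 1) :=
    Nat.mul_le_mul_right (n + 1) (by omega)
  have h2 : (n + 1) ^ (r - 1) * (n + 1) = (n + 1) ^ r := by
    rw [← pow_succ]
    congr 1
    omega
  have h3 : (k - 1) * (n + 1) + c.1 < (k - 1 + 1) * (n + 1) := by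
    rw [Nat.add_mul]
    omega
  omega

/-! ### Auxiliary development for Statement 12 -/

lemma val_mk' {n a : ℕ} (h : a < n) : (⟨a, h⟩ : Fin n).1 = a := rfl

/-- truncated base-`b` digit sum with `r` digits -/
def ds (b r k : ℕ) : ℕ := ∑ j ∈ Finset.range r, k / b ^ j % b

lemma ds_zero (b k : ℕ) : ds b 0 k = 0 := by simp [ds]

lemma ds_zero_right (b r : ℕ) : ds b r 0 = 0 := by simp [ds]

lemma ds_succ (b r k : ℕ) : ds b (r + 1) k = k % b + ds b r (k / b) := by
  rw [ds, Finset.sum_range_succ']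
  simp only [pow_zero, Nat.div_one]
  rw [add_comm]
  congr 1
  apply Finset.sum_congr rfl
  intro j _
  rw [Nat.div_div_eq_div_mul, ← pow_succ']

lemma ds_two {b k : ℕ} (hk : k < b * b) : ds b 2 k = k % b + k / b := by
  have hb : 0 < b := pos_left hk
  have h2 : k / b < b := Nat.div_lt_of_lt_mul (by rwa [Nat.mul_comm] at hk)
  rw [show (2 : ℕ) = 1 + 1 from rfl, ds_succ, ds_succ, Nat.mod_eq_of_lt h2,
    Nat.div_eq_of_lt h2, ds_zero_right]
  omega

lemma ds_top {b : ℕ} : ∀ (r c k : ℕ), c < b → k < b ^ r →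
    ds b (r + 1) (c * b ^ r + k) = c + ds b r k := by
  intro r
  induction r with
  | zero =>
    intro c k hc hk
    have hk0 : k = 0 := by simpa using hk
    subst hk0
    rw [pow_zero, mul_one, add_zero, ds_succ, Nat.mod_eq_of_lt hc, Nat.div_eq_of_lt hc,
      ds_zero_right]
  | succ r ih =>
    intro c k hc hk
    have hb : 0 < b := by omega
    have e : c * b ^ (r + 1) + k = b * (c * b ^ r) + k := by ring
    have h1 : (c * b ^ (r + 1) + k) % b = k % b := by rw [e, Nat.mul_add_mod]
    have h2 : (c * b ^ (r + 1) + k) / b = c * b ^ r + k / b := by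
      rw [e, Nat.mul_add_div hb]
    have hk' : k / b < b ^ r := by
      apply Nat.div_lt_of_lt_mul
      calc k < b ^ (r + 1) := hk
        _ = b * b ^ r := by ring
    rw [ds_succ, h1, h2, ih _ _ hc hk', ds_succ b r k]
    omega

/-- the column selected by row `r` of the L-eliminating matrix -/
def fE (N r : ℕ) : ℕ := if r < N then r else N * (r - N + 2) - 1

lemma fE_lt {N M r : ℕ} (hN : 1 ≤ N) (hM : 1 ≤ M) (hr : r < N + M - 1) : fE N r < N * M := by
  unfold fE
  split_ifs with h
  · have h1 : N * 1 ≤ N * M := Nat.mul_le_mul_left N hM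
    omega
  · have h1 : r - N + 2 ≤ M := by omega
    have h2 : N * (r - N + 2) ≤ N * M := Nat.mul_le_mul_left N h1
    have h3 : 1 * 2 ≤ N * (r - N + 2) := Nat.mul_le_mul hN (by omega)
    omega

lemma fE_sum {N M r : ℕ} (hN : 1 ≤ N) (hr : r < N + M - 1) :
    fE N r % N + fE N r / N = r := by
  unfold fE
  split_ifs with h
  · rw [Nat.mod_eq_of_lt h, Nat.div_eq_of_lt h]
    omega
  · have e : N * (r - N + 2) - 1 = N * (r - N + 1) + (N - 1) := by
      have e2 : r - N + 2 = (r - N + 1) + 1 := by omega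
      rw [e2, Nat.mul_succ]
      omega
    rw [e, Nat.mul_add_mod, Nat.mul_add_div (by omega), Nat.mod_eq_of_lt (by omega),
      Nat.div_eq_of_lt (by omega)]
    omega

lemma collapse {K : ℕ} {t : ℕ} (ht : t < K) (g : Fin K → ℝ) :
    (∑ s : Fin K, (if s.1 = t then (1 : ℝ) else 0) * g s) = g ⟨t, ht⟩ := by
  rw [Finset.sum_eq_single_of_mem ⟨t, ht⟩ (Finset.mem_univ _)]
  · simp
  · intro b _ hb
    rw [if_neg (fun h => hb (Fin.ext h)), zero_mul]

lemma emat_apply {N M : ℕ} (hN : 1 ≤ N) (r : Fin (N + M - 1)) (c : Fin (N * M)) :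
    Emat N M r c = if c.1 = fE N r.1 then 1 else 0 := by
  have hr := r.2
  simp only [Emat, Matrix.of_apply]
  rcases lt_or_ge r.1 N with h | h
  · have h2 : (∑ i ∈ Finset.Icc 2 M,
        if r.1 = N + i - 2 ∧ c.1 + 1 = N * i then (1 : ℝ) else 0) = 0 := by
      apply Finset.sum_eq_zero
      intro i hi
      rw [Finset.mem_Icc] at hi
      rw [if_neg]
      rintro ⟨h1, -⟩
      omega
    rw [h2, add_zero, Finset.sum_eq_single_of_mem r.1 (Finset.mem_range.mpr h)]
    · rw [fE, if_pos h]
      simp [eq_comm]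
    · intro i _ hne
      rw [if_neg]
      rintro ⟨h1, -⟩
      exact hne h1.symm
  · have h1 : (∑ i ∈ Finset.range N, if r.1 = i ∧ c.1 = i then (1 : ℝ) else 0) = 0 := by
      apply Finset.sum_eq_zero
      intro i hi
      rw [Finset.mem_range] at hi
      rw [if_neg]
      rintro ⟨h1, -⟩
      omega
    rw [h1, zero_add,
      Finset.sum_eq_single_of_mem (r.1 - N + 2) (Finset.mem_Icc.mpr ⟨by omega, by omega⟩)]
    · rw [fE, if_neg (not_lt.mpr h)]
      have ht : 1 * 2 ≤ N * (r.1 - N + 2) := Nat.mul_le_mul hN (by omega)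
      have hcond : r.1 = N + (r.1 - N + 2) - 2 := by omega
      split_ifs with hA hB hB
      · rfl
      · exfalso; apply hB; omega
      · exfalso; apply hA; exact ⟨hcond, by omega⟩
      · rfl
    · intro i hi hne
      rw [Finset.mem_Icc] at hi
      rw [if_neg]
      rintro ⟨h1, -⟩
      omega

lemma emat_mulVec {N M : ℕ} (hN : 1 ≤ N) (hM : 1 ≤ M) (v : Fin (N * M) → ℝ)
    (r : Fin (N + M - 1)) :
    (Emat N M *ᵥ v) r = v ⟨fE N r.1, fE_lt hN hM r.2⟩ := by
  simp only [Matrix.mulVec, dotProduct]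
  simp only [emat_apply hN]
  exact collapse (fE_lt hN hM r.2) v

lemma dm_lt {N M ρ : ℕ} (h : ρ < N * M) : ρ % N + ρ / N < N + M - 1 := by
  have h1 : ρ % N < N := Nat.mod_lt _ (pos_left h)
  have h2 : ρ / N < M := Nat.div_lt_of_lt_mul h
  omega

lemma dmat_apply {N M : ℕ} (ρ : Fin (N * M)) (c : Fin (N + M - 1)) :
    Dmat N M ρ c = if c.1 = ρ.1 % N + ρ.1 / N then 1 else 0 := by
  have hN : 0 < N := pos_left ρ.2
  simp only [Dmat, Matrix.of_apply]
  rw [Finset.sum_eq_single_of_mem (ρ.1 % N) (Finset.mem_range.mpr (Nat.mod_lt _ hN))]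
  · rw [Finset.sum_eq_single_of_mem (ρ.1 / N)
      (Finset.mem_range.mpr (Nat.div_lt_of_lt_mul ρ.2))]
    · have h : ρ.1 = N * (ρ.1 / N) + ρ.1 % N := (Nat.div_add_mod ρ.1 N).symm
      have hiff : (ρ.1 = N * (ρ.1 / N) + ρ.1 % N ∧ c.1 = ρ.1 % N + ρ.1 / N) ↔
          (c.1 = ρ.1 % N + ρ.1 / N) := ⟨fun h' => h'.2, fun h' => ⟨h, h'⟩⟩
      rw [if_congr hiff rfl rfl]
    · intro j _ hne
      rw [if_neg]
      rintro ⟨h1, -⟩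
      have : ρ.1 / N = j := by
        rw [h1, Nat.mul_add_div hN, Nat.div_eq_of_lt (Nat.mod_lt _ hN), add_zero]
      exact hne this.symm
  · intro i hi hne
    apply Finset.sum_eq_zero
    intro j _
    rw [if_neg]
    rintro ⟨h1, -⟩
    have : ρ.1 % N = i := by
      rw [h1, Nat.mul_add_mod, Nat.mod_eq_of_lt (Finset.mem_range.mp hi)]
    exact hne this.symm

lemma dmat_mulVec {N M : ℕ} (u : Fin (N + M - 1) → ℝ) (ρ : Fin (N * M)) :
    (Dmat N M *ᵥ u) ρ = u ⟨ρ.1 % N + ρ.1 / N, dm_lt ρ.2⟩ := by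
  simp only [Matrix.mulVec, dotProduct]
  simp only [dmat_apply]
  exact collapse (dm_lt ρ.2) u

lemma emat_mul_dmat {N M : ℕ} (hN : 1 ≤ N) (hM : 1 ≤ M) :
    Emat N M * Dmat N M = (1 : Matrix (Fin (N + M - 1)) (Fin (N + M - 1)) ℝ) := by
  ext r c
  rw [Matrix.mul_apply]
  simp only [emat_apply hN, dmat_apply]
  have hc := collapse (fE_lt hN hM r.2)
    (fun s : Fin (N * M) => if (c : ℕ) = s.1 % N + s.1 / N then (1 : ℝ) else 0)
  simp only at hc
  rw [hc, val_mk', val_mk', fE_sum hN r.2, Matrix.one_apply]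
  simp [Fin.ext_iff, eq_comm]

lemma fpe_val {b d : ℕ} (j : Fin b) (t : Fin d) :
    ((finProdFinEquiv (j, t) : Fin (b * d)) : ℕ) = t.1 + d * j.1 := rfl

lemma fpe_div {b d : ℕ} (j : Fin b) (t : Fin d) :
    ((finProdFinEquiv (j, t) : Fin (b * d)) : ℕ) / d = j.1 := by
  have hd : 0 < d := t.pos
  rw [fpe_val, Nat.add_mul_div_left _ _ hd, Nat.div_eq_of_lt t.2, Nat.zero_add]

lemma fpe_mod {b d : ℕ} (j : Fin b) (t : Fin d) :
    ((finProdFinEquiv (j, t) : Fin (b * d)) : ℕ) % d = t.1 := by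
  rw [fpe_val, Nat.add_mul_mod_self_left, Nat.mod_eq_of_lt t.2]

lemma kron_mul {a b c d b' d' : ℕ} (A : Matrix (Fin a) (Fin b) ℝ) (B : Matrix (Fin c) (Fin d) ℝ)
    (C : Matrix (Fin b) (Fin b') ℝ) (D : Matrix (Fin d) (Fin d') ℝ) :
    kron A B * kron C D = kron (A * C) (B * D) := by
  ext i k
  simp only [kron, Matrix.of_apply, Matrix.mul_apply]
  rw [Finset.sum_mul_sum]
  rw [← Equiv.sum_comp (finProdFinEquiv : Fin b × Fin d ≃ Fin (b * d))]
  rw [Fintype.sum_prod_type]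
  apply Finset.sum_congr rfl
  intro j _
  apply Finset.sum_congr rfl
  intro t _
  simp only [fpe_div, fpe_mod, Fin.eta]
  ring

lemma kron_one_one {s c : ℕ} :
    kron (1 : Matrix (Fin s) (Fin s) ℝ) (1 : Matrix (Fin c) (Fin c) ℝ) = 1 := by
  ext i j
  simp only [kron, Matrix.of_apply, Matrix.one_apply, Fin.mk.injEq]
  by_cases h : i = j
  · subst h
    simp
  · have hne : ¬(i.1 / c = j.1 / c ∧ i.1 % c = j.1 % c) := by
      rintro ⟨h1, h2⟩
      apply h
      apply Fin.ext
      have e1 := Nat.div_add_mod i.1 c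
      have e2 := Nat.div_add_mod j.1 c
      rw [h1, h2] at e1
      omega
    rw [if_neg h]
    rcases not_and_or.mp hne with h' | h'
    · rw [if_neg h', zero_mul]
    · rw [if_neg h', mul_zero]

lemma kron_blk_lt {s c d i t : ℕ} (hi : i < s * c) (ht : t < d) : t + d * (i / c) < s * d := by
  have h1 : i / c < s := div_lt_left hi
  calc t + d * (i / c) < d + d * (i / c) := by omega
    _ = d * (i / c + 1) := by ring
    _ ≤ d * s := Nat.mul_le_mul_left d (by omega)
    _ = s * d := Nat.mul_comm d s

lemma kron_one_mulVec {s c d : ℕ} (A : Matrix (Fin c) (Fin d) ℝ) (w : Fin (s * d) → ℝ)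
    (i : Fin (s * c)) :
    (kron (1 : Matrix (Fin s) (Fin s) ℝ) A *ᵥ w) i
      = ∑ t : Fin d, A ⟨i.1 % c, Nat.mod_lt _ (pos_right i.2)⟩ t *
          w ⟨t.1 + d * (i.1 / c), kron_blk_lt i.2 t.2⟩ := by
  simp only [Matrix.mulVec, dotProduct]
  rw [← Equiv.sum_comp (finProdFinEquiv : Fin s × Fin d ≃ Fin (s * d))]
  rw [Fintype.sum_prod_type]
  rw [Finset.sum_eq_single_of_mem (⟨i.1 / c, div_lt_left i.2⟩ : Fin s) (Finset.mem_univ _)]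
  · apply Finset.sum_congr rfl
    intro t _
    simp only [kron, Matrix.of_apply, fpe_div, fpe_mod, Fin.eta, Matrix.one_apply,
      if_true, one_mul]
    rfl
  · intro b _ hb
    apply Finset.sum_eq_zero
    intro t _
    simp only [kron, Matrix.of_apply, fpe_div, fpe_mod, Fin.eta, Matrix.one_apply]
    rw [if_neg (Ne.symm hb), zero_mul, zero_mul]

lemma cast_mulVec {p q p' q' : ℕ} (h₁ : p' = p) (h₂ : q' = q) (M : Matrix (Fin p) (Fin q) ℝ)
    (v : Fin q' → ℝ) (r : Fin p') :
    (M.submatrix (Fin.cast h₁) (Fin.cast h₂) *ᵥ v) r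
      = (M *ᵥ fun j : Fin q => v (Fin.cast h₂.symm j)) (Fin.cast h₁ r) := by
  subst h₁
  subst h₂
  rfl

lemma cast_mulVec_left {p q p' : ℕ} (h₁ : p' = p) (M : Matrix (Fin p) (Fin q) ℝ)
    (v : Fin q → ℝ) (r : Fin p') :
    (M.submatrix (Fin.cast h₁) id *ᵥ v) r = (M *ᵥ v) (Fin.cast h₁ r) := by
  subst h₁
  rfl

lemma cast_mulVec_right {p q q' : ℕ} (h₂ : q' = q) (M : Matrix (Fin p) (Fin q) ℝ)
    (v : Fin q' → ℝ) (r : Fin p) :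
    (M.submatrix id (Fin.cast h₂) *ᵥ v) r
      = (M *ᵥ fun j : Fin q => v (Fin.cast h₂.symm j)) r := by
  subst h₂
  rfl

lemma cast_eq_finCongr {p q : ℕ} (h : p = q) : (Fin.cast h : Fin p → Fin q) = ⇑(finCongr h) :=
  rfl

lemma EL_mul_DL (n : ℕ) (hn : 1 ≤ n) : ∀ k, EL n k * DL n k = 1
  | 0 => by
    simp only [EL, DL]
    rw [cast_eq_finCongr (arB n), cast_eq_finCongr (arA n), Matrix.submatrix_mul_equiv,
      emat_mul_dmat (by omega) (by omega), Matrix.submatrix_one_equiv]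
  | k + 1 => by
    simp only [EL, DL]
    have hmid : (kron (1 : Matrix (Fin (n + 1)) (Fin (n + 1)) ℝ) (EL n k)).submatrix
          (Fin.cast (arC n k)) id *
        (kron (1 : Matrix (Fin (n + 1)) (Fin (n + 1)) ℝ) (DL n k)).submatrix id
          (Fin.cast (arC n k)) = 1 := by
      rw [show (id : Fin ((n + 1) * (n + 1) ^ (k + 2)) → Fin ((n + 1) * (n + 1) ^ (k + 2)))
          = ⇑(Equiv.refl (Fin ((n + 1) * (n + 1) ^ (k + 2)))) from rfl,
        Matrix.submatrix_mul_equiv, kron_mul, Matrix.one_mul, EL_mul_DL n hn k, kron_one_one,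
        cast_eq_finCongr (arC n k), Matrix.submatrix_one_equiv]
    rw [cast_eq_finCongr (arE n k), cast_eq_finCongr (arD n k), Matrix.submatrix_mul_equiv,
      Matrix.mul_assoc, ← Matrix.mul_assoc
        ((kron (1 : Matrix (Fin (n + 1)) (Fin (n + 1)) ℝ) (EL n k)).submatrix
          (Fin.cast (arC n k)) id),
      hmid, Matrix.one_mul, emat_mul_dmat (by omega) (by omega), Matrix.submatrix_one_equiv]

lemma kron_one_mulVec_dsE (n k : ℕ) (x : ℝ) (A : Matrix (Fin (n * (k + 2) + 1))
      (Fin ((n + 1) ^ (k + 2))) ℝ)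
    (hA : A *ᵥ (fun ρ : Fin ((n + 1) ^ (k + 2)) => x ^ ds (n + 1) (k + 2) ρ.1)
      = fun r : Fin (n * (k + 2) + 1) => x ^ r.1)
    (i : Fin ((n + 1) * (n * (k + 2) + 1))) :
    (kron (1 : Matrix (Fin (n + 1)) (Fin (n + 1)) ℝ) A *ᵥ
        (fun j : Fin ((n + 1) * (n + 1) ^ (k + 2)) => x ^ ds (n + 1) (k + 1 + 2) j.1)) i
      = x ^ (i.1 / (n * (k + 2) + 1) + i.1 % (n * (k + 2) + 1)) := by
  rw [kron_one_mulVec]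
  have hb : i.1 / (n * (k + 2) + 1) < n + 1 := div_lt_left i.2
  have step : ∀ t : Fin ((n + 1) ^ (k + 2)),
      x ^ ds (n + 1) (k + 1 + 2) (t.1 + (n + 1) ^ (k + 2) * (i.1 / (n * (k + 2) + 1)))
        = x ^ (i.1 / (n * (k + 2) + 1)) * x ^ ds (n + 1) (k + 2) t.1 := by
    intro t
    rw [← pow_add]
    congr 1
    rw [show t.1 + (n + 1) ^ (k + 2) * (i.1 / (n * (k + 2) + 1))
        = (i.1 / (n * (k + 2) + 1)) * (n + 1) ^ (k + 2) + t.1 from by ring]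
    rw [show k + 1 + 2 = (k + 2) + 1 from rfl]
    rw [ds_top (k + 2) _ _ hb t.2]
  simp only [val_mk', step]
  have hsplit : (∑ t : Fin ((n + 1) ^ (k + 2)),
      A ⟨i.1 % (n * (k + 2) + 1), Nat.mod_lt _ (pos_right i.2)⟩ t *
        (x ^ (i.1 / (n * (k + 2) + 1)) * x ^ ds (n + 1) (k + 2) t.1))
      = x ^ (i.1 / (n * (k + 2) + 1)) * ∑ t : Fin ((n + 1) ^ (k + 2)),
          A ⟨i.1 % (n * (k + 2) + 1), Nat.mod_lt _ (pos_right i.2)⟩ t *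
            x ^ ds (n + 1) (k + 2) t.1 := by
    rw [Finset.mul_sum]
    apply Finset.sum_congr rfl
    intro t _
    ring
  rw [hsplit]
  have hApp := congrFun hA ⟨i.1 % (n * (k + 2) + 1), Nat.mod_lt _ (pos_right i.2)⟩
  simp only [Matrix.mulVec, dotProduct, val_mk'] at hApp
  rw [hApp, ← pow_add]

lemma kron_one_mulVec_dsD (n k : ℕ) (x : ℝ) (B : Matrix (Fin ((n + 1) ^ (k + 2)))
      (Fin (n * (k + 2) + 1)) ℝ)
    (hB : B *ᵥ (fun r : Fin (n * (k + 2) + 1) => x ^ r.1)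
      = fun ρ : Fin ((n + 1) ^ (k + 2)) => x ^ ds (n + 1) (k + 2) ρ.1)
    (i : Fin ((n + 1) * (n + 1) ^ (k + 2))) :
    (kron (1 : Matrix (Fin (n + 1)) (Fin (n + 1)) ℝ) B *ᵥ
        (fun j : Fin ((n + 1) * (n * (k + 2) + 1)) =>
          x ^ (j.1 % (n * (k + 2) + 1) + j.1 / (n * (k + 2) + 1)))) i
      = x ^ ds (n + 1) (k + 1 + 2) i.1 := by
  rw [kron_one_mulVec]
  have hNpos : 0 < n * (k + 2) + 1 := by omega
  have hcpos : 0 < (n + 1) ^ (k + 2) := Nat.pow_pos (by omega)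
  have hb : i.1 / (n + 1) ^ (k + 2) < n + 1 := div_lt_left i.2
  have step : ∀ t : Fin (n * (k + 2) + 1),
      x ^ ((t.1 + (n * (k + 2) + 1) * (i.1 / (n + 1) ^ (k + 2))) % (n * (k + 2) + 1)
          + (t.1 + (n * (k + 2) + 1) * (i.1 / (n + 1) ^ (k + 2))) / (n * (k + 2) + 1))
        = x ^ (i.1 / (n + 1) ^ (k + 2)) * x ^ t.1 := by
    intro t
    rw [Nat.add_mul_mod_self_left, Nat.mod_eq_of_lt t.2, Nat.add_mul_div_left _ _ hNpos,
      Nat.div_eq_of_lt t.2, ← pow_add]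
    congr 1
    omega
  simp only [val_mk', step]
  have hsplit : (∑ t : Fin (n * (k + 2) + 1),
      B ⟨i.1 % (n + 1) ^ (k + 2), Nat.mod_lt _ (pos_right i.2)⟩ t *
        (x ^ (i.1 / (n + 1) ^ (k + 2)) * x ^ t.1))
      = x ^ (i.1 / (n + 1) ^ (k + 2)) * ∑ t : Fin (n * (k + 2) + 1),
          B ⟨i.1 % (n + 1) ^ (k + 2), Nat.mod_lt _ (pos_right i.2)⟩ t * x ^ t.1 := by
    rw [Finset.mul_sum]
    apply Finset.sum_congr rfl
    intro t _
    ring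
  rw [hsplit]
  have hApp := congrFun hB ⟨i.1 % (n + 1) ^ (k + 2), Nat.mod_lt _ (pos_right i.2)⟩
  simp only [Matrix.mulVec, dotProduct, val_mk'] at hApp
  rw [hApp, ← pow_add]
  congr 1
  have e : (i.1 / (n + 1) ^ (k + 2)) * (n + 1) ^ (k + 2) + i.1 % (n + 1) ^ (k + 2) = i.1 := by
    rw [Nat.mul_comm]
    exact Nat.div_add_mod i.1 ((n + 1) ^ (k + 2))
  conv_rhs => rw [show k + 1 + 2 = (k + 2) + 1 from rfl, ← e,
    ds_top (k + 2) _ _ hb (Nat.mod_lt _ hcpos)]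

lemma EL_pow (n : ℕ) (hn : 1 ≤ n) : ∀ (k : ℕ) (x : ℝ),
    EL n k *ᵥ (fun ρ : Fin ((n + 1) ^ (k + 2)) => x ^ ds (n + 1) (k + 2) ρ.1)
      = fun r : Fin (n * (k + 2) + 1) => x ^ r.1
  | 0, x => by
    funext r
    have hr : r.1 < (n + 1) + (n + 1) - 1 := by have := r.2; omega
    simp only [EL]
    rw [cast_mulVec, emat_mulVec (by omega) (by omega)]
    simp only [Fin.coe_cast, val_mk']
    show x ^ ds (n + 1) 2 (fE (n + 1) r.1) = x ^ r.1
    rw [ds_two (fE_lt (by omega) (by omega) hr), fE_sum (by omega) hr]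
  | k + 1, x => by
    funext r
    have hr : r.1 < (n * (k + 2) + 1) + (n + 1) - 1 := by
      have h1 := r.2
      have h2 : n * (k + 1 + 2) = n * (k + 2) + n := by ring
      omega
    simp only [EL]
    rw [cast_mulVec, ← Matrix.mulVec_mulVec]
    simp only [Fin.coe_cast]
    have hinner : ((kron (1 : Matrix (Fin (n + 1)) (Fin (n + 1)) ℝ) (EL n k)).submatrix
          (Fin.cast (arC n k)) id *ᵥ
          fun j : Fin ((n + 1) * (n + 1) ^ (k + 2)) => x ^ ds (n + 1) (k + 1 + 2) j.1)
        = fun i : Fin ((n * (k + 2) + 1) * (n + 1)) =>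
            x ^ (i.1 / (n * (k + 2) + 1) + i.1 % (n * (k + 2) + 1)) := by
      funext i
      rw [cast_mulVec_left, kron_one_mulVec_dsE n k x (EL n k) (EL_pow n hn k x)]
      simp only [Fin.coe_cast]
    rw [hinner, emat_mulVec (by omega) (by omega)]
    simp only [Fin.coe_cast, val_mk']
    congr 1
    have h := fE_sum (M := n + 1) (by omega : 1 ≤ n * (k + 2) + 1) hr
    omega

lemma DL_pow (n : ℕ) (hn : 1 ≤ n) : ∀ (k : ℕ) (x : ℝ),
    DL n k *ᵥ (fun r : Fin (n * (k + 2) + 1) => x ^ r.1)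
      = fun ρ : Fin ((n + 1) ^ (k + 2)) => x ^ ds (n + 1) (k + 2) ρ.1
  | 0, x => by
    funext ρ
    have hρ : ρ.1 < (n + 1) * (n + 1) := by
      have h1 := ρ.2
      have h2 : (n + 1) ^ (0 + 2) = (n + 1) * (n + 1) := by ring
      omega
    simp only [DL]
    rw [cast_mulVec, dmat_mulVec]
    simp only [Fin.coe_cast, val_mk']
    show x ^ (ρ.1 % (n + 1) + ρ.1 / (n + 1)) = x ^ ds (n + 1) 2 ρ.1
    rw [ds_two hρ]
  | k + 1, x => by
    funext i
    simp only [DL]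
    rw [cast_mulVec, ← Matrix.mulVec_mulVec]
    simp only [Fin.coe_cast]
    have hin : (Dmat (n * (k + 2) + 1) (n + 1) *ᵥ
          fun j : Fin ((n * (k + 2) + 1) + (n + 1) - 1) => x ^ j.1)
        = fun ρ : Fin ((n * (k + 2) + 1) * (n + 1)) =>
            x ^ (ρ.1 % (n * (k + 2) + 1) + ρ.1 / (n * (k + 2) + 1)) := by
      funext ρ
      rw [dmat_mulVec]
    rw [hin, cast_mulVec_right]
    simp only [Fin.coe_cast]
    have h := kron_one_mulVec_dsD n k x (DL n k) (DL_pow n hn k x) (Fin.cast (arE n k) i)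
    simp only [Fin.coe_cast] at h
    exact h

lemma mkronPow_row (n : ℕ) (x : ℝ) : ∀ (r : ℕ) (z : Fin (1 ^ r)) (q : Fin ((n + 1) ^ r)),
    mkronPow (rowOf (Hmon n x)) r z q = x ^ ds (n + 1) r q.1 := by
  intro r
  induction r with
  | zero =>
    intro z q
    simp [mkronPow, ds_zero]
    rfl
  | succ r ih =>
    intro z q
    simp only [mkronPow, Matrix.submatrix_apply, kron, Matrix.of_apply]
    rw [ih]
    simp only [Fin.coe_cast, val_mk', rowOf, Matrix.of_apply, Hmon]
    rw [ds_succ (n + 1) r q.1,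
      pow_add x (q.1 % (n + 1)) (ds (n + 1) r (q.1 / (n + 1)))]
    ring

lemma vecX (n m : ℕ) (x : ℝ) (κ : Fin ((n + 1) * (n + 1) ^ m)) :
    vec (Xmat n m x) κ = x ^ ds (n + 1) (m + 1) κ.1 := by
  have hp : 0 < n + 1 := Nat.succ_pos n
  simp only [vec, Xmat, Matrix.submatrix_apply, kron, Matrix.of_apply, colOf, Hmon]
  rw [mkronPow_row]
  simp only [Fin.coe_cast, val_mk', Nat.div_one]
  rw [Nat.mod_eq_of_lt (Nat.mod_lt _ hp)]
  rw [ds_succ (n + 1) m κ.1, pow_add]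
  ring

/-- For every `n, m ≥ 1`, `E_{n+1}^{(m)} · D_{n+1}^{(m)} = I_{n(m+1)+1}`;
moreover `D_{n+1}^{(m)} · E_{n+1}^{(m)} · vec(X_n^{(m)}(x)) = vec(X_n^{(m)}(x))` for every
`x ∈ ℝ`. -/
theorem stmt12 (n m : ℕ) (hn : 1 ≤ n) (hm : 1 ≤ m) :
    EL n (m - 1) * DL n (m - 1) = 1 ∧
    ∀ x : ℝ,
      DL n (m - 1) *ᵥ (EL n (m - 1) *ᵥ
          fun j : Fin ((n + 1) ^ (m - 1 + 2)) =>
            vec (Xmat n m x)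
              (Fin.cast (by rw [show m - 1 + 2 = m + 1 from by omega]; ring) j))
        = fun j : Fin ((n + 1) ^ (m - 1 + 2)) =>
            vec (Xmat n m x)
              (Fin.cast (by rw [show m - 1 + 2 = m + 1 from by omega]; ring) j) := by
  constructor
  · exact EL_mul_DL n hn (m - 1)
  · intro x
    have key : ∀ w : Fin ((n + 1) ^ (m - 1 + 2)) → ℝ,
        w = (fun ρ : Fin ((n + 1) ^ (m - 1 + 2)) => x ^ ds (n + 1) (m - 1 + 2) ρ.1) →
        DL n (m - 1) *ᵥ (EL n (m - 1) *ᵥ w) = w := by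
      intro w hw
      rw [hw, EL_pow n hn (m - 1) x, DL_pow n hn (m - 1) x]
    apply key
    funext j
    rw [vecX]
    obtain ⟨jv, hj⟩ := j
    simp only [Fin.coe_cast, val_mk']
    rw [show m - 1 + 2 = m + 1 from by omega]

end Correlators
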